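/- arXiv:2308.14028 — 6 statements merged into one kernel-verified Lean document; each statement's English description precedes it below -/
import Mathlib

section
/- Let n ≥ a + b and let A ⊆ ([n] choose a), B ⊆ ([n] choose b) be cross-intersecting families (every member of A intersects every member of B). Then |A|/C(n,a) + |B|/C(n,b) ≤ 1. -/
/-!
Double count the disjoint pairs `(S, T)` of an `a`-set and a `b`-set of `[n]`: there are
`C(n,a) C(n-a,b) = C(n,b) C(n-b,a)` of them. Each `S ∈ A` lies in `C(n-a,b)` of them and each
`T ∈ B` in `C(n-b,a)`, and no pair is counted twice because `A` and `B` are cross-intersecting.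
Dividing by the total gives the inequality; `a + b ≤ n` makes all these binomials positive.
-/

open Finset

theorem Nat.choose_mul_choose_sub_comm (n a b : ℕ) :
    n.choose a * (n - a).choose b = n.choose b * (n - b).choose a := by
  have h₁ := Nat.choose_mul (n := n) (Nat.le_add_right a b)
  have h₂ := Nat.choose_mul (n := n) (Nat.le_add_left b a)
  rw [Nat.add_sub_cancel_left] at h₁
  rw [Nat.add_sub_cancel] at h₂
  rw [← h₁, ← h₂, Nat.choose_symm_add]

namespace Finset
variable {α β : Type*}

theorem card_filter_product_eq_sum_left (s : Finset α) (t : Finset β) (r : α → β → Prop)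
    [∀ a b, Decidable (r a b)] :
    #((s ×ˢ t).filter fun p => r p.1 p.2) = ∑ a ∈ s, #(t.filter (r a)) := by
  simp only [card_filter, sum_product]

theorem card_filter_product_eq_sum_right (s : Finset α) (t : Finset β) (r : α → β → Prop)
    [∀ a b, Decidable (r a b)] :
    #((s ×ˢ t).filter fun p => r p.1 p.2) = ∑ b ∈ t, #(s.filter (r · b)) := by
  simp only [card_filter, sum_product_right]

variable [DecidableEq α]

theorem filter_disjoint_powersetCard (s t : Finset α) (k : ℕ) :
    (powersetCard k s).filter (Disjoint t) = powersetCard k (s \ t) := by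
  ext u
  simp only [mem_filter, mem_powersetCard, subset_sdiff, disjoint_comm (a := t)]
  tauto

theorem card_filter_disjoint_powersetCard {s t : Finset α} (ht : t ⊆ s) (k : ℕ) :
    #((powersetCard k s).filter (Disjoint t)) = (#s - #t).choose k := by
  rw [filter_disjoint_powersetCard, card_powersetCard, card_sdiff_of_subset ht]

def disjointPairs (𝒜 ℬ : Finset (Finset α)) : Finset (Finset α × Finset α) :=
  (𝒜 ×ˢ ℬ).filter fun p => Disjoint p.1 p.2

theorem card_disjointPairs_powersetCard_right {s : Finset α} {𝒜 : Finset (Finset α)} {a : ℕ}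
    (h𝒜 : 𝒜 ⊆ powersetCard a s) (b : ℕ) :
    #(disjointPairs 𝒜 (powersetCard b s)) = #𝒜 * (#s - a).choose b := by
  rw [disjointPairs, card_filter_product_eq_sum_left, sum_const_nat]
  intro u hu
  obtain ⟨hus, rfl⟩ := mem_powersetCard.1 (h𝒜 hu)
  exact card_filter_disjoint_powersetCard hus b

theorem card_disjointPairs_powersetCard_left {s : Finset α} {ℬ : Finset (Finset α)} {b : ℕ}
    (hℬ : ℬ ⊆ powersetCard b s) (a : ℕ) :
    #(disjointPairs (powersetCard a s) ℬ) = #ℬ * (#s - b).choose a := by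
  rw [disjointPairs, card_filter_product_eq_sum_right, sum_const_nat]
  intro v hv
  obtain ⟨hvs, rfl⟩ := mem_powersetCard.1 (hℬ hv)
  simp_rw [disjoint_comm (b := v)]
  exact card_filter_disjoint_powersetCard hvs a

theorem card_mul_choose_add_card_mul_choose_le {s : Finset α} {𝒜 ℬ : Finset (Finset α)}
    {a b : ℕ} (h𝒜 : 𝒜 ⊆ powersetCard a s) (hℬ : ℬ ⊆ powersetCard b s)
    (hcross : ∀ u ∈ 𝒜, ∀ v ∈ ℬ, (u ∩ v).Nonempty) :
    #𝒜 * (#s - a).choose b + #ℬ * (#s - b).choose a ≤ (#s).choose a * (#s - a).choose b := by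
  have hdisj : _root_.Disjoint (disjointPairs 𝒜 (powersetCard b s))
      (disjointPairs (powersetCard a s) ℬ) := by
    refine disjoint_left.2 fun p hp₁ hp₂ => ?_
    simp only [disjointPairs, mem_filter, mem_product] at hp₁ hp₂
    exact not_disjoint_iff_nonempty_inter.2 (hcross _ hp₁.1.1 _ hp₂.1.2) hp₁.2
  have hsub : disjointPairs 𝒜 (powersetCard b s) ∪ disjointPairs (powersetCard a s) ℬ ⊆
      disjointPairs (powersetCard a s) (powersetCard b s) :=
    union_subset (filter_subset_filter _ (product_subset_product h𝒜 subset_rfl))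
      (filter_subset_filter _ (product_subset_product subset_rfl hℬ))
  have := card_le_card hsub
  rwa [card_union_of_disjoint hdisj, card_disjointPairs_powersetCard_right h𝒜,
    card_disjointPairs_powersetCard_left hℬ, card_disjointPairs_powersetCard_right subset_rfl,
    card_powersetCard] at this

end Finset

theorem stmt_1_general (n a b : ℕ) (hn : a + b ≤ n)
    (A B : Finset (Finset ℕ))
    (hA : A ⊆ Finset.powersetCard a (Finset.Icc 1 n))
    (hB : B ⊆ Finset.powersetCard b (Finset.Icc 1 n))
    (hcross : ∀ S ∈ A, ∀ T ∈ B, (S ∩ T).Nonempty) :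
    (A.card : ℝ) / (n.choose a) + (B.card : ℝ) / (n.choose b) ≤ 1 := by
  have hcount := card_mul_choose_add_card_mul_choose_le hA hB hcross
  rw [Nat.card_Icc, Nat.add_sub_cancel] at hcount
  have hsym : (n.choose a * (n - a).choose b : ℝ) = n.choose b * (n - b).choose a := by
    exact_mod_cast Nat.choose_mul_choose_sub_comm n a b
  have hpa : (0 : ℝ) < (n - b).choose a := by exact_mod_cast Nat.choose_pos (by omega)
  have hpb : (0 : ℝ) < (n - a).choose b := by exact_mod_cast Nat.choose_pos (by omega)
  calc (A.card : ℝ) / n.choose a + B.card / n.choose b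
      = (A.card * (n - a).choose b + B.card * (n - b).choose a) /
          (n.choose a * (n - a).choose b) := by
        rw [add_div, mul_div_mul_right _ _ hpb.ne', hsym, mul_div_mul_right _ _ hpa.ne']
    _ ≤ 1 := div_le_one_of_le₀ (by exact_mod_cast hcount) (by positivity)

theorem stmt_1 (n a b : ℕ) (hn : a + b ≤ n) (ha : 0 < a) (hb : 0 < b)
    (A B : Finset (Finset ℕ))
    (hA : A ⊆ Finset.powersetCard a (Finset.Icc 1 n))
    (hB : B ⊆ Finset.powersetCard b (Finset.Icc 1 n))
    (hcross : ∀ S ∈ A, ∀ T ∈ B, (S ∩ T).Nonempty) :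
    (A.card : ℝ) / (n.choose a) + (B.card : ℝ) / (n.choose b) ≤ 1 :=
  stmt_1_general n a b hn A B hA hB hcross
end

section
/- Let A ⊆ ([n] choose a) and B ⊆ ([n] choose b) be cross-intersecting families with n ≥ a + b, and let d be a positive integer with d < b. If |A| ≥ C(n-1,a-1) + C(n-2,a-1) + ... + C(n-d,a-1), then |B| ≤ C(n-d, b-d). -/
/-!
Complementing `B` turns it into a family of `(n - b)`-sets whose `(n - b - a)`-fold shadow
consists of `a`-sets, none of which can lie in `A`; hence `|A| + |∂^(n-b-a) Bᶜ| ≤ C(n, a)`.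
If `|B| > C(n - d, b - d) = C(n - d, n - b)`, compare `Bᶜ` by Kruskal–Katona with the colex
initial segment of `C(n - d, n - b) + 1` sets of size `n - b`: all `(n - b)`-subsets of the first
`n - d` points together with one set containing the next point. Its `(n - b - a)`-fold
shadow contains all `a`-subsets of the first `n - d` points and one more set, so
`|∂^(n-b-a) Bᶜ| > C(n - d, a)`, contradicting `|A| ≥ ∑_{i=1}^d C(n - i, a - 1) = C(n, a) - C(n - d, a)`.
-/

open Finset
open scoped FinsetFamily

theorem Nat.sum_Icc_choose_sub_add_choose (k : ℕ) {d n : ℕ} (hdn : d ≤ n) :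
    ∑ i ∈ Icc 1 d, (n - i).choose k + (n - d).choose (k + 1) = n.choose (k + 1) := by
  induction d with
  | zero => simp
  | succ d ih =>
    rw [sum_Icc_succ_top (by omega), ← ih (by omega),
      show n - d = n - (d + 1) + 1 by omega, Nat.choose_succ_succ']
    ring

namespace Finset.Colex

variable {α : Type*} [LinearOrder α] [LocallyFiniteOrderBot α] {t : Finset α} {q m : α}

lemma eq_Iio_of_toColex_le (h : toColex t ≤ toColex (Iio q)) (hcard : #(Iio q) ≤ #t) :
    t = Iio q := by
  refine eq_of_subset_of_card_le (fun x hxt => ?_) hcard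
  by_contra hxq
  obtain ⟨y, hyq, -, hxy⟩ := h hxt hxq
  exact hxq (mem_Iio.2 (hxy.trans_lt (mem_Iio.1 hyq)))

variable [Fintype α]

lemma initSeg_insert_Iio (hqm : q < m) :
    initSeg (insert m (Iio q)) =
      insert (insert m (Iio q)) (powersetCard (#(Iio q) + 1) (Iio m)) := by
  have hmq : m ∉ Iio q := by simpa using hqm.le
  ext t
  rw [mem_initSeg, mem_insert, mem_powersetCard, card_insert_of_notMem hmq]
  constructor
  · rintro ⟨hcard, hle⟩
    by_cases hmt : m ∈ t
    · left
      have hmt' : {m} ⊆ t := singleton_subset_iff.2 hmt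
      have hms : {m} ⊆ insert m (Iio q) := singleton_subset_iff.2 (mem_insert_self _ _)
      rw [← toColex_sdiff_le_toColex_sdiff hmt' hms, sdiff_singleton_eq_erase,
        sdiff_singleton_eq_erase, erase_insert hmq] at hle
      rw [← eq_Iio_of_toColex_le hle (by rw [card_erase_of_mem hmt]; omega), insert_erase hmt]
    · right
      refine ⟨fun x hxt => mem_Iio.2 (lt_of_le_of_ne ?_ (ne_of_mem_of_not_mem hxt hmt)), hcard.symm⟩
      exact forall_le_mono hle (by simpa using fun _ h => h.le.trans hqm.le) x hxt
  · rintro (rfl | ⟨htm, hcard⟩)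
    · exact ⟨by rw [card_insert_of_notMem hmq], le_rfl⟩
    · refine ⟨hcard.symm, fun x hxt _ => ⟨m, mem_insert_self _ _, fun hmt => ?_, ?_⟩⟩
      · simpa using htm hmt
      · exact (mem_Iio.1 (htm hxt)).le

end Finset.Colex

namespace Finset

theorem choose_lt_card_shadow_iterate_of_choose_lt {n r k i : ℕ} {𝒜 : Finset (Finset (Fin n))}
    (h𝒜 : (𝒜 : Set (Finset (Fin n))).Sized r) (hir : i < r) (hrk : r ≤ k) (hkn : k < n)
    (h : k.choose r < #𝒜) : k.choose (r - i) < #(∂^[i] 𝒜) := by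
  set m : Fin n := ⟨k, hkn⟩
  set q : Fin n := ⟨r - 1, by omega⟩
  set s := insert m (Iio q)
  have hqm : q < m := Fin.mk_lt_mk.2 (by omega)
  have hmq : m ∉ Iio q := by simpa using hqm.le
  have hs : #s = r := by
    rw [card_insert_of_notMem hmq, Fin.card_Iio]
    simp only [q]
    omega
  set ℒ := powersetCard r (Iio m)
  have hinitSeg : Colex.initSeg s = insert s ℒ := by
    rw [Colex.initSeg_insert_Iio hqm, ← card_insert_of_notMem hmq, hs]
  have hms : {m} ⊆ s := singleton_subset_iff.2 (mem_insert_self m (Iio q))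
  obtain ⟨u, hmu, hus, hu⟩ :=
    exists_subsuperset_card_eq hms (n := r - i) (by rw [card_singleton]; omega) (by omega)
  have hℒ : ∂^[i] ℒ ⊂ ∂^[i] (Colex.initSeg s) := by
    rw [ssubset_iff_of_subset ((shadow_monotone.iterate i) (hinitSeg ▸ subset_insert _ _))]
    refine ⟨u, mem_shadow_iterate_iff_exists_sdiff.2 ⟨s, Colex.mem_initSeg_self, hus, ?_⟩, ?_⟩
    · rw [card_sdiff_of_subset hus]
      omega
    · rw [mem_shadow_iterate_iff_exists_sdiff]
      rintro ⟨v, hv, huv, -⟩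
      simpa using (mem_powersetCard.1 hv).1 (huv (singleton_subset_iff.1 hmu))
  calc k.choose (r - i) ≤ #(∂^[i] ℒ) :=
        kruskal_katona_lovasz_form hir.le hrk hkn.le (Set.sized_powersetCard _ _)
          (by rw [card_powersetCard, Fin.card_Iio])
    _ < #(∂^[i] (Colex.initSeg s)) := card_lt_card hℒ
    _ ≤ #(∂^[i] 𝒜) := by
      refine iterated_kk h𝒜 ?_ (hs ▸ Colex.isInitSeg_initSeg)
      rw [hinitSeg, card_insert_of_notMem, card_powersetCard, Fin.card_Iio]
      · exact h
      · intro hsℒ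
        simpa using (mem_powersetCard.1 hsℒ).1 (mem_insert_self m (Iio q))

theorem card_add_card_shadow_iterate_compls_le {α : Type*} [Fintype α] [DecidableEq α]
    {a b : ℕ} {𝒜 ℬ : Finset (Finset α)} (hab : a + b ≤ Fintype.card α)
    (h𝒜 : (𝒜 : Set (Finset α)).Sized a) (hℬ : (ℬ : Set (Finset α)).Sized b)
    (hcross : ∀ s ∈ 𝒜, ∀ t ∈ ℬ, (s ∩ t).Nonempty) :
    #𝒜 + #(∂^[Fintype.card α - b - a] ℬᶜˢ) ≤ (Fintype.card α).choose a := by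
  have hshadow : ((∂^[Fintype.card α - b - a] ℬᶜˢ : Finset _) : Set (Finset α)).Sized a := by
    convert hℬ.compls.shadow_iterate using 1
    omega
  have hdisj : Disjoint 𝒜 (∂^[Fintype.card α - b - a] ℬᶜˢ) := by
    refine disjoint_left.2 fun s hs hs' => ?_
    obtain ⟨t, ht, hst, -⟩ := mem_shadow_iterate_iff_exists_sdiff.1 hs'
    obtain ⟨x, hx⟩ := hcross s hs tᶜ (mem_compls.1 ht)
    exact (mem_compl.1 (mem_inter.1 hx).2) (hst (mem_inter.1 hx).1)
  rw [← card_union_of_disjoint hdisj]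
  exact Set.Sized.card_le (by rw [coe_union]; exact Set.sized_union.2 ⟨h𝒜, hshadow⟩)

theorem card_le_choose_of_crossIntersecting_fin {n a b d : ℕ} {𝒜 ℬ : Finset (Finset (Fin n))}
    (ha : 0 < a) (hab : a + b ≤ n) (hd : 0 < d) (hdb : d < b)
    (h𝒜 : (𝒜 : Set (Finset (Fin n))).Sized a) (hℬ : (ℬ : Set (Finset (Fin n))).Sized b)
    (hcross : ∀ s ∈ 𝒜, ∀ t ∈ ℬ, (s ∩ t).Nonempty)
    (hcard : n.choose a ≤ #𝒜 + (n - d).choose a) :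
    #ℬ ≤ (n - d).choose (b - d) := by
  by_contra! hℬcard
  have hcompls : ((ℬᶜˢ : Finset _) : Set (Finset (Fin n))).Sized (n - b) := by
    simpa using hℬ.compls
  have hsymm : (n - d).choose (b - d) = (n - d).choose (n - b) :=
    Nat.choose_symm_of_eq_add (by omega)
  have hshadow := choose_lt_card_shadow_iterate_of_choose_lt hcompls (i := n - b - a) (k := n - d)
    (by omega) (by omega) (by omega) (by rwa [card_compls, ← hsymm])
  have hdisj := card_add_card_shadow_iterate_compls_le (by simpa using hab) h𝒜 hℬ hcross
  rw [Fintype.card_fin] at hdisj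
  rw [show n - b - (n - b - a) = a by omega] at hshadow
  omega

theorem card_le_choose_of_crossIntersecting {α : Type*} [LinearOrder α] {X : Finset α}
    {a b d : ℕ} {𝒜 ℬ : Finset (Finset α)} (ha : 0 < a) (hab : a + b ≤ #X) (hd : 0 < d)
    (hdb : d < b) (h𝒜 : 𝒜 ⊆ powersetCard a X) (hℬ : ℬ ⊆ powersetCard b X)
    (hcross : ∀ s ∈ 𝒜, ∀ t ∈ ℬ, (s ∩ t).Nonempty)
    (hcard : (#X).choose a ≤ #𝒜 + (#X - d).choose a) :
    #ℬ ≤ (#X - d).choose (b - d) := by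
  rw [← map_orderEmbOfFin_univ X rfl, powersetCard_map] at h𝒜 hℬ
  obtain ⟨𝒜, h𝒜univ, rfl⟩ := subset_map_iff.1 h𝒜
  obtain ⟨ℬ, hℬuniv, rfl⟩ := subset_map_iff.1 hℬ
  rw [card_map] at hcard ⊢
  refine card_le_choose_of_crossIntersecting_fin ha hab hd hdb
    (subset_powersetCard_univ_iff.1 h𝒜univ) (subset_powersetCard_univ_iff.1 hℬuniv)
    (fun s hs t ht => ?_) hcard
  simpa [← map_inter] using hcross _ (mem_map_of_mem _ hs) _ (mem_map_of_mem _ ht)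

end Finset

theorem stmt_2 (n a b d : ℕ) (hn : a + b ≤ n) (hd : 0 < d) (hdb : d < b)
    (A B : Finset (Finset ℕ))
    (hA : A ⊆ Finset.powersetCard a (Finset.Icc 1 n))
    (hB : B ⊆ Finset.powersetCard b (Finset.Icc 1 n))
    (hcross : ∀ S ∈ A, ∀ T ∈ B, (S ∩ T).Nonempty)
    (hcard : ∑ i ∈ Finset.Icc 1 d, (n - i).choose (a - 1) ≤ A.card) :
    B.card ≤ (n - d).choose (b - d) := by
  rcases Nat.eq_zero_or_pos a with rfl | ha
  · obtain ⟨S, hS⟩ : A.Nonempty := card_pos.1 (hd.trans_le (by simpa using hcard))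
    have hS0 : S = ∅ := by simpa using hA hS
    have hBempty : B = ∅ :=
      eq_empty_of_forall_notMem fun T hT => by simpa [hS0] using hcross S hS T hT
    simp [hBempty]
  obtain ⟨k, rfl⟩ : ∃ k, a = k + 1 := ⟨a - 1, by omega⟩
  have hsum := Nat.sum_Icc_choose_sub_add_choose k (show d ≤ n by omega)
  have hX : #(Icc 1 n) = n := by simp
  simpa [hX] using card_le_choose_of_crossIntersecting ha (by rwa [hX]) hd hdb hA hB hcross
    (by rw [hX]; simp only [Nat.add_sub_cancel] at hcard; omega)
end

section
/- Let A ⊆ ([n] choose a) and B ⊆ ([n] choose b) be cross-intersecting families with n ≥ a + b, and let d be a positive integer with d < b. If |A| ≥ C(n-1,a-1) + C(n-2,a-1) + ... + C(n-d,a-1), then |A| + (C(n-d,a)/C(n-d,b-d))·|B| ≤ C(n,a). -/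
/-!
Pass to complements: `Aᶜ` is `(n - a)`-uniform and, by cross-intersection, `B` avoids its
`k`-th shadow, `k = n - a - b`, so `|B| + |∂ᵏ Aᶜ| ≤ C(n, b)`. By Kruskal–Katona, `∂ᵏ Aᶜ` is at
least as large as `∂ᵏ 𝒞` for the initial colex segment `𝒞` with `|A|` sets. Let `D` be the `d`
largest points. The `(n - a)`-sets missing a point of `D` form an initial colex segment of size
`∑_{i ≤ d} C(n - i, a - 1)`, so the size hypothesis puts all of them into `𝒞`, and the remaining
sets of `𝒞` are `D ∪ T` for `T` in the link `ℒ` of `D`, an `(n - a - d)`-uniform family on `n - d`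
points. Hence `∂ᵏ 𝒞` contains all `b`-sets missing a point of `D` together with `D ∪ ∂ᵏ ℒ`, which
gives `|B| + |∂ᵏ ℒ| ≤ C(n - d, b - d)`, and the local LYM inequality
`|ℒ| / C(n - d, a) ≤ |∂ᵏ ℒ| / C(n - d, b - d)` turns this into the claimed bound.
-/

open Finset
open scoped FinsetFamily

variable {α β : Type*}

theorem Nat.sum_Icc_choose_sub_add_choose_sub {n a d : ℕ} (ha : a ≠ 0) (hd : d ≤ n) :
    ∑ i ∈ Icc 1 d, (n - i).choose (a - 1) + (n - d).choose a = n.choose a := by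
  induction d with
  | zero => simp
  | succ d ih =>
    obtain ⟨a, rfl⟩ := Nat.exists_eq_add_one_of_ne_zero ha
    rw [sum_Icc_succ_top (by omega), ← ih (by omega), show n - d = n - (d + 1) + 1 by omega,
      Nat.choose_succ_succ, Nat.add_sub_cancel]
    ring

theorem add_div_mul_le_of_div_le_div {x s t X Y : ℝ} (hX : 0 < X) (hY : 0 < Y)
    (hxs : x / X ≤ s / Y) (hst : t + s ≤ Y) : x + X / Y * t ≤ X := by
  rw [div_le_div_iff₀ hX hY] at hxs
  have : X / Y * t ≤ X / Y * (Y - s) := by gcongr; linarith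
  calc x + X / Y * t ≤ x + X / Y * (Y - s) := by linarith
    _ = X - (s * X - x * Y) / Y := by field_simp; ring
    _ ≤ X := by linarith [div_nonneg (sub_nonneg.2 hxs) hY.le]

namespace Finset

theorem exists_downClosed_subset_card_eq [LinearOrder β] (P : Finset β) {m : ℕ}
    (hm : m ≤ #P) : ∃ Q ⊆ P, #Q = m ∧ ∀ x ∈ Q, ∀ y ∈ P, y < x → y ∈ Q := by
  induction m with
  | zero => exact ⟨∅, empty_subset _, rfl, by simp⟩
  | succ m ih =>
    obtain ⟨Q, hQP, hQm, hQ⟩ := ih (by omega)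
    have hne : (P \ Q).Nonempty := by rw [← card_pos, card_sdiff_of_subset hQP]; omega
    obtain ⟨hzP, hzQ⟩ := mem_sdiff.1 ((P \ Q).min'_mem hne)
    refine ⟨insert _ Q, insert_subset hzP hQP, by rw [card_insert_of_notMem hzQ, hQm], ?_⟩
    rintro x hx y hy hyx
    rw [mem_insert] at hx ⊢
    rcases hx with rfl | hx
    · by_contra! hyQ
      exact hyx.not_ge ((P \ Q).min'_le y (mem_sdiff.2 ⟨hy, hyQ.2⟩))
    · exact Or.inr (hQ x hx y hy hyx)

theorem card_filter_not_superset_powersetCard_univ_add [DecidableEq α] [Fintype α]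
    {D : Finset α} {r : ℕ} (hD : #D ≤ r) :
    #((powersetCard r univ).filter (¬ D ⊆ ·)) + (Fintype.card α - #D).choose (r - #D) =
      (Fintype.card α).choose r := by
  rw [← card_univ, ← card_filter_powersetCard_subset D univ r (subset_univ D) hD, add_comm,
    card_filter_add_card_filter_not, card_powersetCard]

theorem disjoint_map_subtype_notMem {D : Finset α} (T : Finset {x // x ∉ D}) :
    Disjoint D (T.map (Function.Embedding.subtype _)) :=
  disjoint_right.2 fun _ hx => by
    obtain ⟨y, -, rfl⟩ := mem_map.1 hx
    exact y.2

section Link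
variable [DecidableEq α] (D : Finset α)

def unionSubtype (T : Finset {x // x ∉ D}) : Finset α :=
  D ∪ T.map (Function.Embedding.subtype _)

variable {D}

theorem card_unionSubtype (T : Finset {x // x ∉ D}) : #(D.unionSubtype T) = #D + #T := by
  rw [unionSubtype, card_union_of_disjoint (disjoint_map_subtype_notMem T), card_map]

theorem unionSubtype_sdiff_unionSubtype (S T : Finset {x // x ∉ D}) :
    D.unionSubtype S \ D.unionSubtype T = (S \ T).map (Function.Embedding.subtype _) := by
  ext x
  by_cases hx : x ∈ D <;> simp [unionSubtype, hx]

theorem unionSubtype_injective : Function.Injective D.unionSubtype := fun S T h =>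
  map_injective (Function.Embedding.subtype _) <| by
    rw [← union_sdiff_cancel_left (disjoint_map_subtype_notMem S),
      ← union_sdiff_cancel_left (disjoint_map_subtype_notMem T)]
    exact congrArg (· \ D) h

theorem unionSubtype_mono {S T : Finset {x // x ∉ D}} (h : S ⊆ T) :
    D.unionSubtype S ⊆ D.unionSubtype T :=
  union_subset_union_right (map_subset_map.2 h)

theorem mem_range_unionSubtype {S : Finset α} : S ∈ Set.range D.unionSubtype ↔ D ⊆ S := by
  refine ⟨fun ⟨T, hT⟩ => hT ▸ subset_union_left, fun hDS => ⟨S.subtype (· ∉ D), ?_⟩⟩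
  ext x
  by_cases hx : x ∈ D
  · simp [unionSubtype, hx, hDS hx]
  · simp [unionSubtype, hx]

variable (D) in
/-- The link `{S \ D | D ⊆ S ∈ 𝒜}`, as a family of sets of points outside `D`. -/
noncomputable def link (𝒜 : Finset (Finset α)) : Finset (Finset {x // x ∉ D}) :=
  𝒜.preimage D.unionSubtype unionSubtype_injective.injOn

variable {𝒜 : Finset (Finset α)}

theorem mem_link {T : Finset {x // x ∉ D}} : T ∈ D.link 𝒜 ↔ D.unionSubtype T ∈ 𝒜 :=
  mem_preimage

theorem card_link : #(D.link 𝒜) = #(𝒜.filter (D ⊆ ·)) := by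
  classical
  rw [link, card_preimage]
  simp only [mem_range_unionSubtype]

theorem _root_.Set.Sized.link {r : ℕ} (h𝒜 : (𝒜 : Set (Finset α)).Sized r) :
    (D.link 𝒜 : Set (Finset {x // x ∉ D})).Sized (r - #D) := fun T hT => by
  have := h𝒜 (mem_link.1 hT)
  rw [card_unionSubtype] at this
  omega

theorem shadow_iterate_link_subset (k : ℕ) : ∂^[k] (D.link 𝒜) ⊆ D.link (∂^[k] 𝒜) := by
  intro T hT
  obtain ⟨S, hS, hTS, hk⟩ := mem_shadow_iterate_iff_exists_sdiff.1 hT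
  rw [mem_link, mem_shadow_iterate_iff_exists_sdiff]
  exact ⟨_, mem_link.1 hS, unionSubtype_mono hTS,
    by rw [unionSubtype_sdiff_unionSubtype, card_map, hk]⟩

end Link

section Shadow
variable [DecidableEq α] [Fintype α] {𝒜 : Finset (Finset α)} {D : Finset α} {r k : ℕ}

theorem mem_shadow_iterate_of_not_superset
    (h𝒜 : ∀ S : Finset α, #S = r → ¬ D ⊆ S → S ∈ 𝒜) (hr : r < Fintype.card α)
    {T : Finset α} (hT : #T + k = r) (hDT : ¬ D ⊆ T) : T ∈ ∂^[k] 𝒜 := by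
  obtain ⟨x, hxD, hxT⟩ := not_subset.1 hDT
  have hTx : T ⊆ univ.erase x := fun y hy => mem_erase.2 ⟨fun h => hxT (h ▸ hy), mem_univ y⟩
  obtain ⟨S, hTS, hSx, hS⟩ := exists_subsuperset_card_eq (n := r) hTx (by omega)
    (by rw [card_erase_of_mem (mem_univ x), card_univ]; omega)
  have hxS : x ∉ S := fun h => (mem_erase.1 (hSx h)).1 rfl
  rw [mem_shadow_iterate_iff_exists_sdiff]
  exact ⟨S, h𝒜 S hS fun h => hxS (h hxD), hTS, by rw [card_sdiff_of_subset hTS]; omega⟩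

theorem card_filter_not_superset_add_card_shadow_iterate_link_le
    (h𝒜 : ∀ S : Finset α, #S = r → ¬ D ⊆ S → S ∈ 𝒜) (hr : r < Fintype.card α) (hk : k ≤ r) :
    #((powersetCard (r - k) univ).filter (¬ D ⊆ ·)) + #(∂^[k] (D.link 𝒜)) ≤ #(∂^[k] 𝒜) :=
  calc _ ≤ #((∂^[k] 𝒜).filter (¬ D ⊆ ·)) + #((∂^[k] 𝒜).filter (D ⊆ ·)) := by
        refine add_le_add (card_le_card fun T hT => ?_) ?_
        · rw [mem_filter, mem_powersetCard_univ] at hT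
          exact mem_filter.2 ⟨mem_shadow_iterate_of_not_superset h𝒜 hr (by omega) hT.2, hT.2⟩
        · rw [← card_link]
          exact card_le_card (shadow_iterate_link_subset k)
    _ = #(∂^[k] 𝒜) := by rw [add_comm, card_filter_add_card_filter_not]

theorem card_div_choose_le_card_shadow_iterate_div_choose {𝕜 : Type*} [Semifield 𝕜]
    [LinearOrder 𝕜] [IsStrictOrderedRing 𝕜] (hk : k ≤ r) (h𝒜 : (𝒜 : Set (Finset α)).Sized r) :
    (#𝒜 : 𝕜) / (Fintype.card α).choose r ≤ #(∂^[k] 𝒜) / (Fintype.card α).choose (r - k) := by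
  induction k with
  | zero => simp
  | succ k ih =>
    rw [Function.iterate_succ_apply', show r - (k + 1) = r - k - 1 by omega]
    exact (ih (by omega)).trans
      (card_div_choose_le_card_shadow_div_choose (by omega) h𝒜.shadow_iterate)

end Shadow

namespace Colex
variable [LinearOrder α] [Fintype α] {𝒞 : Finset (Finset α)} {D : Finset α} {r k : ℕ}

theorem exists_isInitSeg_card_eq (r : ℕ) {m : ℕ} (hm : m ≤ (Fintype.card α).choose r) :
    ∃ 𝒞 : Finset (Finset α), IsInitSeg 𝒞 r ∧ #𝒞 = m := by
  set P := (powersetCard r (univ : Finset α)).map toColex.toEmbedding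
  have hP : ∀ s : Finset α, toColex s ∈ P ↔ #s = r := fun s => by
    rw [mem_map_equiv]; exact mem_powersetCard_univ
  obtain ⟨Q, hQP, hQm, hQ⟩ := exists_downClosed_subset_card_eq P (by simpa [P] using hm)
  set 𝒞 := Q.map ofColex.toEmbedding
  have h𝒞 : ∀ s, s ∈ 𝒞 ↔ toColex s ∈ Q := fun s => by rw [mem_map_equiv]; rfl
  refine ⟨𝒞, ⟨fun s hs => (hP s).1 (hQP ((h𝒞 s).1 hs)), fun s t hs ⟨hts, ht⟩ => ?_⟩, ?_⟩
  · exact (h𝒞 t).2 (hQ _ ((h𝒞 s).1 hs) _ ((hP t).2 ht) hts)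
  · rw [card_map, hQm]

theorem isInitSeg_filter_not_superset (hD : ∀ x ∉ D, ∀ y ∈ D, x < y) (r : ℕ) :
    IsInitSeg ((powersetCard r univ).filter (¬ D ⊆ ·)) r := by
  refine ⟨fun s hs => by simp_all, fun s t hs ⟨hts, ht⟩ => ?_⟩
  simp only [mem_filter, mem_powersetCard_univ] at hs ⊢
  refine ⟨ht, fun hDt => ?_⟩
  obtain ⟨x, hxs, hxt, hlt⟩ := toColex_lt_toColex_iff_exists_forall_lt.1 hts
  obtain ⟨y, hyD, hys⟩ := not_subset.1 hs.2
  exact (hlt y (hDt hyD) hys).not_gt (hD x (fun hxD => hxt (hDt hxD)) y hyD)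

theorem IsInitSeg.filter_not_superset_subset (h𝒞 : IsInitSeg 𝒞 r)
    (hD : ∀ x ∉ D, ∀ y ∈ D, x < y) (hcard : #((powersetCard r univ).filter (¬ D ⊆ ·)) ≤ #𝒞) :
    (powersetCard r univ).filter (¬ D ⊆ ·) ⊆ 𝒞 := by
  obtain h | h := (isInitSeg_filter_not_superset hD r).total h𝒞
  · exact h
  · exact (eq_of_subset_of_card_le h hcard).ge

theorem IsInitSeg.choose_add_card_shadow_iterate_link_le (h𝒞 : IsInitSeg 𝒞 r)
    (hD : ∀ x ∉ D, ∀ y ∈ D, x < y) (hcard : #((powersetCard r univ).filter (¬ D ⊆ ·)) ≤ #𝒞)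
    (hr : r < Fintype.card α) (hk : #D + k ≤ r) :
    (Fintype.card α).choose (r - k) + #(∂^[k] (D.link 𝒞)) ≤
      #(∂^[k] 𝒞) + (Fintype.card α - #D).choose (r - k - #D) := by
  have h𝒞D := h𝒞.filter_not_superset_subset hD hcard
  have := card_filter_not_superset_add_card_shadow_iterate_link_le (k := k)
    (fun S hS hDS => h𝒞D (mem_filter.2 ⟨mem_powersetCard_univ.2 hS, hDS⟩)) hr (by omega)
  have := card_filter_not_superset_powersetCard_univ_add (D := D) (r := r - k) (by omega)
  omega

end Colex

end Finset

def CrossIntersecting [DecidableEq α] (A B : Finset (Finset α)) : Prop :=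
  ∀ S ∈ A, ∀ T ∈ B, (S ∩ T).Nonempty

namespace CrossIntersecting
variable [DecidableEq α] {A B : Finset (Finset α)}

theorem of_map [DecidableEq β] (f : α ↪ β)
    (h : CrossIntersecting (A.map (mapEmbedding f).toEmbedding)
      (B.map (mapEmbedding f).toEmbedding)) :
    CrossIntersecting A B := fun S hS T hT => by
  simpa [← map_inter] using h _ (mem_map_of_mem _ hS) _ (mem_map_of_mem _ hT)

theorem eq_empty_of_empty_mem (h : CrossIntersecting A B) (hA : ∅ ∈ A) : B = ∅ :=
  eq_empty_of_forall_notMem fun T hT => by simpa using h ∅ hA T hT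

variable [Fintype α]

theorem card_add_mul_card_le_one (h : CrossIntersecting A B)
    (hA : (A : Set (Finset α)).Sized 0) (hA₀ : A.Nonempty) (c : ℝ) :
    (#A : ℝ) + c * #B ≤ 1 := by
  obtain ⟨S, hS⟩ := hA₀
  have hB : B = ∅ := h.eq_empty_of_empty_mem (card_eq_zero.1 (hA hS) ▸ hS)
  have hA1 : #A ≤ 1 := by simpa using hA.card_le
  rw [hB, card_empty, Nat.cast_zero, mul_zero, add_zero]
  exact_mod_cast hA1

theorem disjoint_shadow_iterate_compls (h : CrossIntersecting A B) (k : ℕ) :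
    Disjoint B (∂^[k] Aᶜˢ) := by
  refine disjoint_left.2 fun T hTB hT => ?_
  obtain ⟨Sc, hSc, hTSc, -⟩ := mem_shadow_iterate_iff_exists_sdiff.1 hT
  obtain ⟨x, hx⟩ := h _ (mem_compls.1 hSc) T hTB
  exact mem_compl.1 (mem_inter.1 hx).1 (hTSc (mem_inter.1 hx).2)

theorem card_add_card_shadow_iterate_compls_le {a b : ℕ} (h : CrossIntersecting A B)
    (hA : (A : Set (Finset α)).Sized a) (hB : (B : Set (Finset α)).Sized b)
    (hab : a + b ≤ Fintype.card α) :
    #B + #(∂^[Fintype.card α - a - b] Aᶜˢ) ≤ (Fintype.card α).choose b := by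
  rw [← card_union_of_disjoint (h.disjoint_shadow_iterate_compls _)]
  refine Set.Sized.card_le (coe_union B _ ▸ Set.sized_union.2 ⟨hB, ?_⟩)
  convert hA.compls.shadow_iterate using 2
  omega

end CrossIntersecting

theorem CrossIntersecting.card_add_card_shadow_iterate_le_of_isInitSeg {n a b : ℕ}
    {A B 𝒞 : Finset (Finset (Fin n))} (h : CrossIntersecting A B)
    (hA : (A : Set (Finset (Fin n))).Sized a) (hB : (B : Set (Finset (Fin n))).Sized b)
    (hab : a + b ≤ n) (h𝒞 : Colex.IsInitSeg 𝒞 (n - a)) (h𝒞A : #𝒞 ≤ #A) :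
    #B + #(∂^[n - a - b] 𝒞) ≤ n.choose b := by
  have hAB : #B + #(∂^[n - a - b] Aᶜˢ) ≤ n.choose b := by
    simpa using h.card_add_card_shadow_iterate_compls_le hA hB (by simpa using hab)
  have hAc : (Aᶜˢ : Set (Finset (Fin n))).Sized (n - a) := by simpa using hA.compls
  have := iterated_kk (k := n - a - b) hAc (by rwa [card_compls]) h𝒞
  omega

theorem CrossIntersecting.card_add_mul_card_le_of_ne_zero {n a b d : ℕ} (hn : a + b ≤ n)
    (ha : a ≠ 0) (hdb : d ≤ b) {A B : Finset (Finset (Fin n))} (hAB : CrossIntersecting A B)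
    (hA : (A : Set (Finset (Fin n))).Sized a) (hB : (B : Set (Finset (Fin n))).Sized b)
    (hcard : ∑ i ∈ Icc 1 d, (n - i).choose (a - 1) ≤ #A) {D : Finset (Fin n)} (hDcard : #D = d)
    (hDtop : ∀ x ∉ D, ∀ y ∈ D, x < y) :
    (#A : ℝ) + ((n - d).choose a / (n - d).choose (b - d) : ℝ) * #B ≤ n.choose a := by
  set k := n - a - b
  set P := (powersetCard (n - a) univ).filter (¬ D ⊆ ·)
  have hP : #P + (n - d).choose a = n.choose a := by
    have := card_filter_not_superset_powersetCard_univ_add (D := D) (r := n - a) (by omega)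
    rwa [Fintype.card_fin, hDcard, show n - a - d = n - d - a by omega,
      Nat.choose_symm (by omega), Nat.choose_symm (by omega)] at this
  have hhockey := Nat.sum_Icc_choose_sub_add_choose_sub ha (by omega : d ≤ n)
  obtain ⟨𝒞, h𝒞, h𝒞A⟩ := Colex.exists_isInitSeg_card_eq (α := Fin n) (n - a) (m := #A)
    (by simpa [Nat.choose_symm (by omega : a ≤ n)] using hA.card_le)
  have hB𝒞 : #B + #(∂^[k] 𝒞) ≤ n.choose b :=
    hAB.card_add_card_shadow_iterate_le_of_isInitSeg hA hB hn h𝒞 h𝒞A.le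
  have hlower := h𝒞.choose_add_card_shadow_iterate_link_le (k := k) hDtop (show #P ≤ #𝒞 by omega)
    (by simp only [Fintype.card_fin]; omega) (by omega)
  rw [Fintype.card_fin, hDcard, show n - a - k = b by omega] at hlower
  have hlink : #A ≤ #P + #(D.link 𝒞) := by
    rw [card_link, ← h𝒞A, ← card_filter_add_card_filter_not (D ⊆ ·), add_comm]
    exact add_le_add_left
      (card_le_card (filter_subset_filter (¬ D ⊆ ·) h𝒞.1.subset_powersetCard_univ)) _
  have hlym := card_div_choose_le_card_shadow_iterate_div_choose (𝕜 := ℝ) (k := k)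
    (by omega : k ≤ n - a - #D) h𝒞.1.link
  rw [Fintype.card_subtype_compl, Fintype.card_coe, Fintype.card_fin, hDcard,
    show n - a - d = n - d - a by omega, Nat.choose_symm (by omega),
    show n - d - a - k = b - d by omega] at hlym
  have hX : (0 : ℝ) < (n - d).choose a := by exact_mod_cast Nat.choose_pos (by omega)
  have hY : (0 : ℝ) < (n - d).choose (b - d) := by exact_mod_cast Nat.choose_pos (by omega)
  calc (#A : ℝ) + ((n - d).choose a / (n - d).choose (b - d) : ℝ) * #B
      ≤ #P + (#(D.link 𝒞) + ((n - d).choose a / (n - d).choose (b - d) : ℝ) * #B) := by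
        rw [← add_assoc]; gcongr; exact_mod_cast hlink
    _ ≤ #P + (n - d).choose a := by
        gcongr
        exact add_div_mul_le_of_div_le_div hX hY hlym (by exact_mod_cast (by omega))
    _ = n.choose a := by exact_mod_cast hP

theorem CrossIntersecting.card_add_mul_card_le {n a b d : ℕ} (hn : a + b ≤ n) (hd : 0 < d)
    (hdb : d ≤ b) {A B : Finset (Finset (Fin n))} (hAB : CrossIntersecting A B)
    (hA : (A : Set (Finset (Fin n))).Sized a) (hB : (B : Set (Finset (Fin n))).Sized b)
    (hcard : ∑ i ∈ Icc 1 d, (n - i).choose (a - 1) ≤ #A) :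
    (#A : ℝ) + ((n - d).choose a / (n - d).choose (b - d) : ℝ) * #B ≤ n.choose a := by
  obtain rfl | ha := eq_or_ne a 0
  · rw [show ∑ i ∈ Icc 1 d, (n - i).choose (0 - 1) = d by simp] at hcard
    simpa using hAB.card_add_mul_card_le_one hA (card_pos.1 (by omega)) _
  refine hAB.card_add_mul_card_le_of_ne_zero hn ha hdb hA hB hcard
    (D := Ici ⟨n - d, by omega⟩) (by rw [Fin.card_Ici]; dsimp only; omega) fun x hx y hy => ?_
  exact (not_le.1 (mem_Ici.not.1 hx)).trans_le (mem_Ici.1 hy)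

theorem stmt_3 (n a b d : ℕ) (hn : a + b ≤ n) (hd : 0 < d) (hdb : d < b)
    (A B : Finset (Finset ℕ))
    (hA : A ⊆ Finset.powersetCard a (Finset.Icc 1 n))
    (hB : B ⊆ Finset.powersetCard b (Finset.Icc 1 n))
    (hcross : ∀ S ∈ A, ∀ T ∈ B, (S ∩ T).Nonempty)
    (hcard : ∑ i ∈ Finset.Icc 1 d, (n - i).choose (a - 1) ≤ A.card) :
    (A.card : ℝ) + (((n - d).choose a : ℝ) / ((n - d).choose (b - d))) * B.card ≤ n.choose a := by
  let f : Fin n ↪ ℕ := ((Icc 1 n).orderEmbOfFin (by simp)).toEmbedding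
  have hf : Icc 1 n = univ.map f := coe_injective <| by
    rw [coe_map, coe_univ, Set.image_univ]
    exact (range_orderEmbOfFin _ _).symm
  rw [hf, powersetCard_map] at hA hB
  obtain ⟨A', hA', rfl⟩ := subset_map_iff.1 hA
  obtain ⟨B', hB', rfl⟩ := subset_map_iff.1 hB
  simp only [card_map] at hcard ⊢
  exact (CrossIntersecting.of_map f hcross).card_add_mul_card_le hn hd hdb.le
    (subset_powersetCard_univ_iff.1 hA') (subset_powersetCard_univ_iff.1 hB') hcard
end

section
/- Let n > 2k ≥ 4. For 3 ≤ i ≤ k, let F_i denote the family of all k-subsets F of [n] such that either 1 ∈ F and F ∩ [2,i] ≠ ∅, or [2,i] ⊆ F. Then |F_3| = |F_4| < |F_5| < ... < |F_{k+1}| < C(n-1, k-1). -/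
open Finset

/-- The family F_i: all k-subsets F of [n] with (1 ∈ F and F ∩ [2,i] ≠ ∅) or [2,i] ⊆ F. -/
def famF (n k i : ℕ) : Finset (Finset ℕ) :=
  (Finset.powersetCard k (Finset.Icc 1 n)).filter
    (fun F => (1 ∈ F ∧ (F ∩ Finset.Icc 2 i).Nonempty) ∨ Finset.Icc 2 i ⊆ F)

/-
Split `F_i` according to whether `1 ∈ F`. The members containing `1` are the `C(n-1,k-1)` sets
through `1` except the `C(n-i,k-1)` that miss `[2,i]`; the members avoiding `1` are the `k`-subsets
of `[2,n]` containing `[2,i]`, and counting their complements in `[2,n]` gives `C(n-i, n-1-k)`, a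
formula that stays valid for `i > k+1`. Pascal's rule then gives
`|F_{i+1}| - |F_i| = C(n-i-1,k-2) - C(n-i-1,k+1-i)`, which vanishes for `i = 3` and is positive for
`4 ≤ i ≤ k` because `C(m,·)` increases strictly up to `m/2` and `n > 2k`. Finally
`|F_{k+1}| = C(n-1,k-1) - C(n-k-1,k-1) + 1` with `C(n-k-1,k-1) ≥ 2`.
-/

namespace Nat

theorem choose_lt_choose_succ {m r : ℕ} (h : 2 * r + 1 < m) : m.choose r < m.choose (r + 1) := by
  have hpos : 0 < m.choose r := choose_pos (by omega)
  refine Nat.lt_of_mul_lt_mul_right (a := r + 1) ?_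
  rw [choose_succ_right_eq]
  exact Nat.mul_lt_mul_of_pos_left (by omega) hpos

theorem choose_strictMonoOn (m : ℕ) : StrictMonoOn m.choose (Set.Iic (m / 2)) :=
  strictMonoOn_Iic_of_lt_succ fun r hr => by
    rw [Order.succ_eq_add_one]
    exact choose_lt_choose_succ (by omega)

theorem choose_lt_choose {m a b : ℕ} (hab : a < b) (h : a + b < m) :
    m.choose a < m.choose b := by
  rcases le_total b (m - b) with hb | hb
  · exact choose_strictMonoOn m (Set.mem_Iic.2 (by omega)) (Set.mem_Iic.2 (by omega)) hab
  · rw [← choose_symm (by omega : b ≤ m)]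
    exact choose_strictMonoOn m (Set.mem_Iic.2 (by omega)) (Set.mem_Iic.2 (by omega)) (by omega)

end Nat

namespace Finset

theorem card_filter_powersetCard_subset_eq_choose_card_sub {α : Type*} [DecidableEq α]
    {s t : Finset α} {r : ℕ} (hst : s ⊆ t) (hr : r ≤ #t) :
    #{x ∈ t.powersetCard r | s ⊆ x} = (#t - #s).choose (#t - r) := by
  rcases le_or_gt #s r with hsr | hrs
  · rw [card_filter_powersetCard_subset s t r hst hsr]
    exact Nat.choose_symm_of_eq_add (by omega)
  · have := card_le_card hst
    rw [Nat.choose_eq_zero_of_lt (by omega), card_eq_zero, filter_eq_empty_iff]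
    intro x hx hsx
    have := card_le_card hsx
    rw [(mem_powersetCard.1 hx).2] at this
    omega

end Finset

section

variable {n k i : ℕ}

theorem card_filter_one_mem (hk : 1 ≤ k) (hn : 1 ≤ n) :
    #{F ∈ powersetCard k (Icc 1 n) | 1 ∈ F} = (n - 1).choose (k - 1) := by
  have h := card_filter_powersetCard_subset {1} (Icc 1 n) k (by simp [hn]) (by simpa using hk)
  simpa using h

theorem card_filter_one_mem_disjoint (hk : 1 ≤ k) (hi : 2 ≤ i) (hin : i ≤ n) :
    #{F ∈ powersetCard k (Icc 1 n) | 1 ∈ F ∧ Disjoint F (Icc 2 i)} = (n - i).choose (k - 1) := by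
  have hsub : {1} ⊆ Icc 1 n \ Icc 2 i := by
    simp only [singleton_subset_iff, mem_sdiff, mem_Icc]; omega
  have h := card_filter_powersetCard_subset _ _ k hsub (by simpa using hk)
  rw [card_sdiff_of_subset (Icc_subset_Icc (by omega) hin)] at h
  simp only [Nat.card_Icc, card_singleton, singleton_subset_iff] at h
  convert h using 2
  · ext F
    simp only [mem_filter, mem_powersetCard, subset_sdiff]
    tauto
  · omega

theorem card_filter_one_mem_inter_nonempty_add (hk : 1 ≤ k) (hi : 2 ≤ i) (hin : i ≤ n) :
    #{F ∈ powersetCard k (Icc 1 n) | 1 ∈ F ∧ (F ∩ Icc 2 i).Nonempty} + (n - i).choose (k - 1)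
      = (n - 1).choose (k - 1) := by
  rw [← card_filter_one_mem hk (by omega), ← card_filter_one_mem_disjoint hk hi hin,
    ← card_filter_add_card_filter_not (s := {F ∈ powersetCard k (Icc 1 n) | 1 ∈ F})
      (fun F => (F ∩ Icc 2 i).Nonempty), filter_filter, filter_filter]
  simp only [← not_disjoint_iff_nonempty_inter, not_not]

theorem card_filter_one_notMem_Icc_subset (hi : 2 ≤ i) (hin : i ≤ n) (hkn : k < n) :
    #{F ∈ powersetCard k (Icc 1 n) | 1 ∉ F ∧ Icc 2 i ⊆ F} = (n - i).choose (n - 1 - k) := by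
  have h := card_filter_powersetCard_subset_eq_choose_card_sub (r := k)
    (Icc_subset_Icc_right hin : Icc 2 i ⊆ Icc 2 n) (by simp only [Nat.card_Icc]; omega)
  simp only [Nat.card_Icc] at h
  convert h using 2
  · ext F
    simp only [mem_filter, mem_powersetCard, subset_iff, mem_Icc]
    grind
  · omega
  · omega

end

theorem card_famF_eq_add (n k i : ℕ) (hi : 2 ≤ i) :
    #(famF n k i) = #{F ∈ powersetCard k (Icc 1 n) | 1 ∈ F ∧ (F ∩ Icc 2 i).Nonempty}
      + #{F ∈ powersetCard k (Icc 1 n) | 1 ∉ F ∧ Icc 2 i ⊆ F} := by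
  rw [← card_filter_add_card_filter_not (s := famF n k i) (1 ∈ ·), famF, filter_filter,
    filter_filter]
  have h2 : 2 ∈ Icc 2 i := by simp [hi]
  congr 2 <;> refine filter_congr fun F _ => ?_
  · have : Icc 2 i ⊆ F → (F ∩ Icc 2 i).Nonempty := fun h => ⟨2, mem_inter.2 ⟨h h2, h2⟩⟩
    tauto
  · tauto

theorem card_famF_add_choose (n k i : ℕ) (hk : 1 ≤ k) (hi : 2 ≤ i) (hin : i ≤ n) (hkn : k < n) :
    #(famF n k i) + (n - i).choose (k - 1)
      = (n - 1).choose (k - 1) + (n - i).choose (n - 1 - k) := by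
  rw [card_famF_eq_add n k i hi, card_filter_one_notMem_Icc_subset hi hin hkn]
  have := card_filter_one_mem_inter_nonempty_add hk hi hin
  omega

theorem card_famF_succ_add_choose (n k i : ℕ) (hk : 2 ≤ k) (hi : 2 ≤ i) (hik : i ≤ k + 1)
    (hkn : k + 2 ≤ n) :
    #(famF n k (i + 1)) + (n - (i + 1)).choose (k + 1 - i)
      = #(famF n k i) + (n - (i + 1)).choose (k - 2) := by
  have hFi := card_famF_add_choose n k i (by omega) hi (by omega) (by omega)
  have hFi' := card_famF_add_choose n k (i + 1) (by omega) (by omega) (by omega) (by omega)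
  have pascal₁ : (n - i).choose (k - 1)
      = (n - (i + 1)).choose (k - 2) + (n - (i + 1)).choose (k - 1) := by
    rw [Nat.choose_eq_choose_pred_add (by omega) (by omega)]
    congr 1
  have pascal₂ : (n - i).choose (n - 1 - k)
      = (n - (i + 1)).choose (k + 1 - i) + (n - (i + 1)).choose (n - 1 - k) := by
    rw [Nat.choose_eq_choose_pred_add (by omega) (by omega),
      Nat.choose_symm_of_eq_add (show n - i - 1 = (n - 1 - k - 1) + (k + 1 - i) by omega)]
    congr 1
  omega

theorem stmt_5 (n k : ℕ) (hk : 2 ≤ k) (hn : 2 * k < n) :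
    (famF n k 3).card = (famF n k 4).card ∧
    (∀ i, 4 ≤ i → i ≤ k → (famF n k i).card < (famF n k (i + 1)).card) ∧
    (famF n k (k + 1)).card < (n - 1).choose (k - 1) := by
  refine ⟨?_, fun i hi hik => ?_, ?_⟩
  · have := card_famF_succ_add_choose n k 3 hk (by norm_num) (by omega) (by omega)
    rw [show k + 1 - 3 = k - 2 by omega] at this
    exact (Nat.add_right_cancel this).symm
  · have hstep := card_famF_succ_add_choose n k i hk (by omega) (by omega) (by omega)
    have := Nat.choose_lt_choose (m := n - (i + 1)) (a := k + 1 - i) (b := k - 2) (by omega)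
      (by omega)
    omega
  · have h := card_famF_add_choose n k (k + 1) (by omega) (by omega) (by omega) (by omega)
    rw [show n - 1 - k = n - (k + 1) by omega, Nat.choose_self] at h
    have := Nat.choose_lt_choose (m := n - (k + 1)) (a := 0) (b := k - 1) (by omega) (by omega)
    rw [Nat.choose_zero_right] at this
    omega
end

section
/- Suppose F_△ ⊊ F ⊆ F_3 where F_△ = {F ∈ ([n] choose k) : |F ∩ [3]| = 2} and F_3 = {F ∈ ([n] choose k) : |F ∩ [3]| ≥ 2}, and n > 2k ≥ 6. Then γ(F_△) = γ(F), but for every C > 1, γ_C(F) < γ_C(F_△). -/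
open Finset

def deg (F : Finset (Finset ℕ)) (x : ℕ) : ℕ := (F.filter (fun A => x ∈ A)).card

def maxDeg (n : ℕ) (F : Finset (Finset ℕ)) : ℕ := (Finset.Icc 1 n).sup (deg F)

/-- The pure triangle family on [n]. -/
def triangleFam (n k : ℕ) : Finset (Finset ℕ) :=
  (Finset.powersetCard k (Finset.Icc 1 n)).filter
    (fun F => (F ∩ ({1, 2, 3} : Finset ℕ)).card = 2)

/-- The family F_3 = {F : |F ∩ [3]| ≥ 2} on [n]. -/
def bigTriangleFam (n k : ℕ) : Finset (Finset ℕ) :=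
  (Finset.powersetCard k (Finset.Icc 1 n)).filter
    (fun F => 2 ≤ (F ∩ ({1, 2, 3} : Finset ℕ)).card)

/-
Every member of `F \ F_△` contains `[3]`, in particular the vertex `1`, and `1` is a vertex of
maximum degree of `F_△`: its degree is `2 * C(n-3, k-2)`, while a vertex outside `[3]` has degree
`3 * C(n-4, k-3)`, which is not larger once `n > 2k`. Hence adding the `m ≥ 1` sets of `F \ F_△`
raises both `|F|` and `Δ(F)` by exactly `m`: `γ` does not change, and `γ_C` drops by `(C - 1) m`.
-/

theorem card_powersetCard_filter_inter_eq {α : Type*} [DecidableEq α] {s Q P : Finset α} {k : ℕ}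
    (hPQ : P ⊆ Q) (hQs : Q ⊆ s) (hP : #P ≤ k) :
    #{A ∈ powersetCard k s | A ∩ Q = P} = (#s - #Q).choose (k - #P) := by
  rw [← card_sdiff_of_subset hQs, ← card_powersetCard]
  refine card_nbij' (· \ Q) (· ∪ P) ?_ ?_ ?_ ?_
  · intro A hA
    simp only [coe_filter, Set.mem_ofPred_eq, mem_powersetCard, mem_coe] at hA ⊢
    obtain ⟨⟨hAs, rfl⟩, hAQ⟩ := hA
    refine ⟨sdiff_subset_sdiff hAs le_rfl, ?_⟩
    have := card_sdiff_add_card_inter A Q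
    rw [hAQ] at this
    omega
  · intro B hB
    simp only [coe_filter, Set.mem_ofPred_eq, mem_powersetCard, mem_coe] at hB ⊢
    obtain ⟨hBs, hBk⟩ := hB
    have hBQ : Disjoint B Q := disjoint_of_subset_left hBs sdiff_disjoint
    refine ⟨⟨union_subset (hBs.trans sdiff_subset) (hPQ.trans hQs), ?_⟩, ?_⟩
    · rw [card_union_of_disjoint (hBQ.mono_right hPQ)]
      omega
    · rw [union_inter_distrib_right, disjoint_iff_inter_eq_empty.mp hBQ, inter_eq_left.mpr hPQ,
        empty_union]
  · intro A hA
    simp only [coe_filter, Set.mem_ofPred_eq] at hA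
    simp only [← hA.2, sdiff_union_inter]
  · intro B hB
    simp only [mem_coe, mem_powersetCard] at hB
    simp only [union_sdiff_distrib, sdiff_eq_self_of_disjoint
      (disjoint_of_subset_left hB.1 sdiff_disjoint), sdiff_eq_empty_iff_subset.mpr hPQ,
      union_empty]

section
variable {s Q : Finset ℕ} {k j x : ℕ}

theorem deg_filter_card_inter_eq_sum :
    deg {A ∈ powersetCard k s | #(A ∩ Q) = j} x
      = ∑ P ∈ Q.powersetCard j, #{A ∈ powersetCard k s | A ∩ Q = P ∧ x ∈ A} := by
  rw [deg, card_eq_sum_card_fiberwise (f := (· ∩ Q)) (t := Q.powersetCard j)]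
  · refine sum_congr rfl fun P hP => ?_
    simp only [filter_filter]
    refine congrArg card (filter_congr fun A _ => ?_)
    have hPj := (mem_powersetCard.mp hP).2
    constructor
    · rintro ⟨⟨-, hx⟩, h⟩; exact ⟨h, hx⟩
    · rintro ⟨h, hx⟩; exact ⟨⟨h ▸ hPj, hx⟩, h⟩
  · intro A hA
    simp only [coe_filter, Set.mem_ofPred_eq, mem_filter] at hA
    exact mem_powersetCard.mpr ⟨inter_subset_right, hA.1.2⟩

theorem deg_filter_card_inter_of_mem (hQs : Q ⊆ s) (hj : j ≤ k) (hx : x ∈ Q) :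
    deg {A ∈ powersetCard k s | #(A ∩ Q) = j} x
      = #{P ∈ Q.powersetCard j | x ∈ P} * (#s - #Q).choose (k - j) := by
  rw [deg_filter_card_inter_eq_sum, card_eq_sum_ones, sum_filter, sum_mul]
  refine sum_congr rfl fun P hP => ?_
  obtain ⟨hPQ, rfl⟩ := mem_powersetCard.mp hP
  have hfiber : {A ∈ powersetCard k s | A ∩ Q = P ∧ x ∈ A}
      = {A ∈ powersetCard k s | A ∩ Q = P ∧ x ∈ P} :=
    filter_congr fun A _ => and_congr_right fun h => by rw [← h, mem_inter, and_iff_left hx]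
  rw [hfiber]
  split_ifs with hxP
  · simp only [hxP, and_true]
    rw [card_powersetCard_filter_inter_eq hPQ hQs hj, one_mul]
  · simp only [hxP, and_false, filter_false, card_empty, zero_mul]

theorem deg_filter_card_inter_of_notMem (hQs : Q ⊆ s) (hxs : x ∈ s) (hj : j < k) (hx : x ∉ Q) :
    deg {A ∈ powersetCard k s | #(A ∩ Q) = j} x
      = (#Q).choose j * (#s - #Q - 1).choose (k - j - 1) := by
  rw [deg_filter_card_inter_eq_sum, ← card_powersetCard, ← smul_eq_mul, ← sum_const]
  refine sum_congr rfl fun P hP => ?_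
  obtain ⟨hPQ, rfl⟩ := mem_powersetCard.mp hP
  have hfiber : {A ∈ powersetCard k s | A ∩ Q = P ∧ x ∈ A}
      = {A ∈ powersetCard k s | A ∩ insert x Q = insert x P} := by
    refine filter_congr fun A _ => ⟨fun ⟨h, hxA⟩ => by rw [inter_insert_of_mem hxA, h], fun h => ?_⟩
    have hxA : x ∈ A := (mem_inter.mp (h ▸ mem_insert_self x P : x ∈ A ∩ insert x Q)).1
    refine ⟨?_, hxA⟩
    calc A ∩ Q = A ∩ insert x Q ∩ Q := by rw [inter_assoc, inter_eq_right.mpr (subset_insert x Q)]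
      _ = P := by rw [h, insert_inter_of_notMem hx, inter_eq_left.mpr hPQ]
  rw [hfiber, card_powersetCard_filter_inter_eq (insert_subset_insert x hPQ)
    (insert_subset hxs hQs), card_insert_of_notMem hx, card_insert_of_notMem (fun h => hx (hPQ h))]
  · rw [Nat.sub_sub, Nat.sub_sub]
  · rw [card_insert_of_notMem (fun h => hx (hPQ h))]; omega
end

theorem three_mul_choose_le {m j : ℕ} (h : 3 * (j + 1) ≤ 2 * (m + 1)) :
    3 * m.choose j ≤ 2 * (m + 1).choose (j + 1) := by
  refine Nat.le_of_mul_le_mul_left ?_ m.succ_pos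
  calc (m + 1) * (3 * m.choose j) = 3 * (j + 1) * (m + 1).choose (j + 1) := by
        rw [mul_left_comm, Nat.add_one_mul_choose_eq]; ring
    _ ≤ 2 * (m + 1) * (m + 1).choose (j + 1) := Nat.mul_le_mul_right _ h
    _ = (m + 1) * (2 * (m + 1).choose (j + 1)) := by ring

theorem triple_subset_Icc {n : ℕ} (hn : 3 ≤ n) : ({1, 2, 3} : Finset ℕ) ⊆ Icc 1 n := by
  intro y hy
  simp only [mem_insert, mem_singleton] at hy
  rw [mem_Icc]
  omega

theorem deg_triangleFam_of_le_three {n k x : ℕ} (hn : 3 ≤ n) (hk : 2 ≤ k)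
    (hx : x ∈ ({1, 2, 3} : Finset ℕ)) :
    deg (triangleFam n k) x = 2 * (n - 3).choose (k - 2) := by
  have hpairs : #{P ∈ ({1, 2, 3} : Finset ℕ).powersetCard 2 | x ∈ P} = 2 := by
    simp only [mem_insert, mem_singleton] at hx
    rcases hx with rfl | rfl | rfl <;> decide
  rw [triangleFam, deg_filter_card_inter_of_mem (triple_subset_Icc hn) hk hx, hpairs,
    Nat.card_Icc, Nat.add_sub_cancel]
  rfl

theorem deg_triangleFam_of_three_lt {n k x : ℕ} (hk : 3 ≤ k) (hx : 3 < x) (hxn : x ≤ n) :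
    deg (triangleFam n k) x = 3 * (n - 4).choose (k - 3) := by
  rw [triangleFam, deg_filter_card_inter_of_notMem (triple_subset_Icc (by omega))
    (mem_Icc.mpr ⟨by omega, hxn⟩) (by omega) (by simp only [mem_insert, mem_singleton]; omega),
    Nat.card_Icc, Nat.add_sub_cancel]
  rfl

theorem deg_triangleFam_le_deg_one {n k x : ℕ} (hk : 3 ≤ k) (hn : 2 * k < n) (hx : x ∈ Icc 1 n) :
    deg (triangleFam n k) x ≤ deg (triangleFam n k) 1 := by
  rw [deg_triangleFam_of_le_three (x := 1) (by omega) (by omega) (by simp)]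
  rw [mem_Icc] at hx
  by_cases hx3 : x ≤ 3
  · rw [deg_triangleFam_of_le_three (by omega) (by omega)
      (by simp only [mem_insert, mem_singleton]; omega)]
  · rw [deg_triangleFam_of_three_lt hk (by omega) hx.2]
    have := three_mul_choose_le (m := n - 4) (j := k - 3) (by omega)
    rwa [show n - 4 + 1 = n - 3 by omega, show k - 3 + 1 = k - 2 by omega] at this

theorem maxDeg_triangleFam {n k : ℕ} (hk : 3 ≤ k) (hn : 2 * k < n) :
    maxDeg n (triangleFam n k) = deg (triangleFam n k) 1 :=
  le_antisymm (Finset.sup_le fun _ hx => deg_triangleFam_le_deg_one hk hn hx)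
    (le_sup (f := deg _) (mem_Icc.mpr ⟨le_rfl, by omega⟩))

theorem deg_eq_deg_add_deg_sdiff {T F : Finset (Finset ℕ)} (h : T ⊆ F) (x : ℕ) :
    deg F x = deg T x + deg (F \ T) x := by
  rw [deg, deg, deg, ← card_union_of_disjoint (disjoint_filter_filter disjoint_sdiff),
    ← filter_union, union_sdiff_of_subset h]

theorem maxDeg_eq_add_card_sdiff {n v : ℕ} {T F : Finset (Finset ℕ)} (hv : v ∈ Icc 1 n)
    (hTF : T ⊆ F) (hmax : maxDeg n T = deg T v) (hvF : ∀ A ∈ F \ T, v ∈ A) :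
    maxDeg n F = maxDeg n T + #(F \ T) := by
  have hdeg_v : deg (F \ T) v = #(F \ T) := congrArg card (filter_true_of_mem hvF)
  refine le_antisymm (Finset.sup_le fun x hx => ?_) ?_
  · rw [deg_eq_deg_add_deg_sdiff hTF]
    exact add_le_add (le_sup (f := deg T) hx) (card_filter_le _ _)
  · rw [hmax, ← hdeg_v, ← deg_eq_deg_add_deg_sdiff hTF]
    exact le_sup (f := deg F) hv

theorem subset_of_mem_bigTriangleFam_sdiff {n k : ℕ} {A : Finset ℕ}
    (hA : A ∈ bigTriangleFam n k \ triangleFam n k) : ({1, 2, 3} : Finset ℕ) ⊆ A := by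
  have hle : #(A ∩ {1, 2, 3}) ≤ #({1, 2, 3} : Finset ℕ) := card_le_card inter_subset_right
  simp only [bigTriangleFam, triangleFam, mem_sdiff, mem_filter] at hA
  obtain ⟨⟨hAk, htwo⟩, hA⟩ := hA
  have hne : #(A ∩ {1, 2, 3}) ≠ 2 := fun h => hA ⟨hAk, h⟩
  have hge : #({1, 2, 3} : Finset ℕ) ≤ #(A ∩ {1, 2, 3}) := by
    rw [show #({1, 2, 3} : Finset ℕ) = 3 from rfl] at hle ⊢
    omega
  exact inter_eq_right.mp (eq_of_subset_of_card_le inter_subset_right hge)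

theorem stmt_17 (n k : ℕ) (hk : 3 ≤ k) (hn : 2 * k < n)
    (F : Finset (Finset ℕ)) (h1 : triangleFam n k ⊂ F) (h2 : F ⊆ bigTriangleFam n k) :
    (triangleFam n k).card - maxDeg n (triangleFam n k) = F.card - maxDeg n F ∧
    ∀ C : ℝ, 1 < C →
      (F.card : ℝ) - C * maxDeg n F
        < ((triangleFam n k).card : ℝ) - C * maxDeg n (triangleFam n k) := by
  set T := triangleFam n k
  have hTF : T ⊆ F := h1.subset
  have hextra : ∀ A ∈ F \ T, 1 ∈ A := fun A hA =>
    subset_of_mem_bigTriangleFam_sdiff (sdiff_subset_sdiff h2 le_rfl hA) (by simp)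
  have hmax : maxDeg n F = maxDeg n T + #(F \ T) :=
    maxDeg_eq_add_card_sdiff (mem_Icc.mpr ⟨le_rfl, by omega⟩) hTF (maxDeg_triangleFam hk hn) hextra
  have hcard : #F = #T + #(F \ T) := by rw [add_comm, card_sdiff_add_card_eq_card hTF]
  have hpos : 0 < #(F \ T) := card_pos.mpr (sdiff_nonempty.mpr h1.not_subset)
  rw [hcard, hmax]
  refine ⟨by omega, fun C hC => ?_⟩
  have : (#(F \ T) : ℝ) < C * #(F \ T) := lt_mul_left (by exact_mod_cast hpos) hC
  push_cast
  linarith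
end

section
/- If F ⊆ ([n] choose k) is intersecting with n > 2k, x ∈ [n], and there exists F₀ ∈ F with x ∉ F₀, then the degree of x in F is at most C(n-1, k-1) - C(n-k-1, k-1). -/
/-! Removing `x` maps the sets of `F` through `x` injectively to `(k-1)`-subsets of `S \ {x}`.
Each image still meets `F₀`, because `A ∩ F₀ ≠ ∅` and `x ∉ F₀`. Of the `C(|S|-1, k-1)` such subsets,
the `C(|S|-1-k, k-1)` that avoid `F₀` are therefore never hit. -/

open Finset

namespace Finset

variable {α : Type*} [DecidableEq α]

theorem card_powersetCard_sdiff_powersetCard_sdiff {A S : Finset α} (hAS : A ⊆ S) (r : ℕ) :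
    #(powersetCard r S \ powersetCard r (S \ A)) = (#S).choose r - (#S - #A).choose r := by
  rw [card_sdiff_of_subset (powersetCard_mono sdiff_subset), card_powersetCard,
    card_powersetCard, card_sdiff_of_subset hAS]

theorem erase_mem_powersetCard_sdiff_of_intersecting {S A F₀ : Finset α}
    {F : Finset (Finset α)} {k : ℕ} {x : α} (hF : F ⊆ powersetCard k S)
    (hI : (F : Set (Finset α)).Intersecting) (hA : A ∈ F) (hxA : x ∈ A) (hF₀ : F₀ ∈ F)
    (hxF₀ : x ∉ F₀) :
    A.erase x ∈ powersetCard (k - 1) (S.erase x) \ powersetCard (k - 1) (S.erase x \ F₀) := by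
  obtain ⟨hAS, hAk⟩ := mem_powersetCard.1 (hF hA)
  obtain ⟨y, hyA, hyF₀⟩ := hI.exists_mem_finset hA hF₀
  have hyx : y ≠ x := ne_of_mem_of_not_mem hyF₀ hxF₀
  refine mem_sdiff.2 ⟨mem_powersetCard.2 ⟨erase_subset_erase x hAS, ?_⟩, fun hsub => ?_⟩
  · rw [card_erase_of_mem hxA, hAk]
  · exact (mem_sdiff.1 ((mem_powersetCard.1 hsub).1 (mem_erase.2 ⟨hyx, hyA⟩))).2 hyF₀

theorem card_filter_mem_le_of_intersecting {S F₀ : Finset α} {F : Finset (Finset α)} {k : ℕ}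
    {x : α} (hF : F ⊆ powersetCard k S) (hI : (F : Set (Finset α)).Intersecting)
    (hx : x ∈ S) (hF₀ : F₀ ∈ F) (hxF₀ : x ∉ F₀) :
    #{A ∈ F | x ∈ A} ≤ (#S - 1).choose (k - 1) - (#S - 1 - k).choose (k - 1) := by
  have hF₀S : F₀ ⊆ S.erase x := fun y hy =>
    mem_erase.2 ⟨ne_of_mem_of_not_mem hy hxF₀, (mem_powersetCard.1 (hF hF₀)).1 hy⟩
  have hF₀k : #F₀ = k := (mem_powersetCard.1 (hF hF₀)).2
  calc #{A ∈ F | x ∈ A}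
      ≤ #(powersetCard (k - 1) (S.erase x) \ powersetCard (k - 1) (S.erase x \ F₀)) := by
        refine card_le_card_of_injOn (fun A => A.erase x) (fun A hA => ?_)
          ((erase_injOn' x).mono fun A hA => (mem_filter.1 hA).2)
        obtain ⟨hAF, hxA⟩ := mem_filter.1 hA
        exact erase_mem_powersetCard_sdiff_of_intersecting hF hI hAF hxA hF₀ hxF₀
    _ = (#S - 1).choose (k - 1) - (#S - 1 - k).choose (k - 1) := by
        rw [card_powersetCard_sdiff_powersetCard_sdiff hF₀S, card_erase_of_mem hx, hF₀k]

end Finset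

theorem stmt_18_general (n k : ℕ)
    (F : Finset (Finset ℕ)) (hF : F ⊆ Finset.powersetCard k (Finset.Icc 1 n))
    (hint : ∀ A ∈ F, ∀ B ∈ F, (A ∩ B).Nonempty)
    (x : ℕ) (hx : x ∈ Finset.Icc 1 n) (F₀ : Finset ℕ) (hF₀ : F₀ ∈ F) (hxF₀ : x ∉ F₀) :
    (F.filter (fun A => x ∈ A)).card ≤ (n - 1).choose (k - 1) - (n - k - 1).choose (k - 1) := by
  have hI : (F : Set (Finset ℕ)).Intersecting := fun A hA B hB =>
    not_disjoint_iff_nonempty_inter.2 (hint A hA B hB)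
  have h := card_filter_mem_le_of_intersecting hF hI hx hF₀ hxF₀
  rwa [Nat.card_Icc, Nat.add_sub_cancel, Nat.sub_right_comm] at h

theorem stmt_18 (n k : ℕ) (hn : 2 * k < n) (hk : 1 ≤ k)
    (F : Finset (Finset ℕ)) (hF : F ⊆ Finset.powersetCard k (Finset.Icc 1 n))
    (hint : ∀ A ∈ F, ∀ B ∈ F, (A ∩ B).Nonempty)
    (x : ℕ) (hx : x ∈ Finset.Icc 1 n) (F₀ : Finset ℕ) (hF₀ : F₀ ∈ F) (hxF₀ : x ∉ F₀) :
    (F.filter (fun A => x ∈ A)).card ≤ (n - 1).choose (k - 1) - (n - k - 1).choose (k - 1) :=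
  stmt_18_general n k F hF hint x hx F₀ hF₀ hxF₀
end
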